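/- arXiv:1803.08265 — 10 statements merged into one kernel-verified Lean document; each statement's English description precedes it below -/
import Mathlib

section
/- In the ring of formal power series ℚ[[u,z]], the identity exp(A(u,z))·(1 − z·u·Cat(u)) = 1 holds, where A(u,z) = ∑_{n≥0} ∑_{j=0}^{n} (1/(n+1))·C(2n−j, n)·z^{j+1}·u^{n+1} and Cat(u) = ∑_{n≥0} (1/(n+1))·C(2n,n)·u^n. -/
/-!
The series `A` is `-log (1 - z·u·Cat(u))`, which we verify through `∂/∂z`. Expanding in powers of
`z`, the coefficient of `z ^ j` in `∂A/∂z` is `(u·Cat(u)) ^ (j + 1)`, because the coefficients of the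
powers of the Catalan series are ballot numbers; hence `∂A/∂z · (1 - z·u·Cat) = u·Cat`. Then
`G = exp(A)·(1 - z·u·Cat)` satisfies `∂G/∂z = 0`, and at `z = 0` both factors are `1`, so `G = 1`.
-/

open MvPowerSeries

/-- The series `A(u,z) = ∑_{n≥0} ∑_{j=0}^{n} (1/(n+1))·C(2n−j,n)·z^{j+1}·u^{n+1}`,
given by its coefficients: the coefficient of `u^{n+1} z^{j+1}` (with `j ≤ n`) is
`(1/(n+1))·C(2n−j, n)`.  Variable `0` is `u`, variable `1` is `z`. -/
noncomputable def A : MvPowerSeries (Fin 2) ℚ :=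
  fun d => if 1 ≤ d 1 ∧ d 1 ≤ d 0 then
    (1 / (d 0 : ℚ)) * ((2 * (d 0 - 1) - (d 1 - 1)).choose (d 0 - 1) : ℚ) else 0

/-- The Catalan series `Cat(u) = ∑_{n≥0} (1/(n+1))·C(2n,n)·u^n`, viewed in `ℚ[[u,z]]`. -/
noncomputable def CatU : MvPowerSeries (Fin 2) ℚ :=
  fun d => if d 1 = 0 then ((2 * d 0).choose (d 0) : ℚ) / (d 0 + 1) else 0

/-- The exponential `exp(f) = ∑_{k≥0} f^k/k!` of a formal power series `f` with zero
constant term, defined coefficientwise (the sum is finite in each coefficient). -/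
noncomputable def expOf (f : MvPowerSeries (Fin 2) ℚ) : MvPowerSeries (Fin 2) ℚ :=
  fun d => ∑ k ∈ Finset.range (d 0 + d 1 + 1),
    (MvPowerSeries.coeff d (f ^ k)) / (k.factorial : ℚ)

theorem cast_catalan_eq {K : Type*} [Field K] [CharZero K] (n : ℕ) :
    (catalan n : K) = (2 * n).choose n / (n + 1) := by
  rw [eq_div_iff (Nat.cast_add_one_ne_zero n), ← Nat.centralBinom_eq_two_mul_choose,
    ← succ_mul_catalan_eq_centralBinom]
  push_cast
  ring

namespace PowerSeries

theorem mk_pow_succ_mul_one_sub_X_mul {S : Type*} [CommRing S] (q : S) :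
    mk (fun n => q ^ (n + 1)) * (1 - X * C q) = C q := by
  have hmk : mk (fun n => q ^ (n + 1)) = C q * rescale q (mk 1) := by
    ext n
    simp [coeff_rescale, pow_succ']
  rw [hmk, mul_assoc, mul_comm X, ← rescale_X, ← map_one (rescale q), ← map_sub, ← map_mul,
    mk_one_mul_one_sub_eq_one, map_one, mul_one]

theorem map_catalanSeries_eq {K : Type*} [CommSemiring K] :
    map (Nat.castRingHom K) catalanSeries = 1 + X * map (Nat.castRingHom K) catalanSeries ^ 2 := by
  conv_lhs => rw [← catalanSeries_sq_mul_X_add_one]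
  simp only [map_add, map_mul, map_pow, map_X, map_one]
  ring

variable {K : Type*} [Field K] [CharZero K]

-- `(k + 1) / (m + k + 1) * C(2m + k, m)` is the ballot number `[X ^ m] Cat ^ (k + 1)`.
theorem ballot_succ_succ (m k : ℕ) :
    ((k + 2 : ℕ) : K) / (m + k + 3 : ℕ) * ((2 * m + k + 3).choose (m + 1) : ℕ) =
      ((k + 1 : ℕ) : K) / (m + k + 2 : ℕ) * ((2 * m + k + 2).choose (m + 1) : ℕ) +
        ((k + 3 : ℕ) : K) / (m + k + 3 : ℕ) * ((2 * m + k + 2).choose m : ℕ) := by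
  have hratio := Nat.choose_succ_right_eq (2 * m + k + 2) m
  rw [show 2 * m + k + 2 - m = m + k + 2 by omega] at hratio
  have hratio' : ((2 * m + k + 2).choose (m + 1) : K) * (m + 1) =
      ((2 * m + k + 2).choose m : K) * (m + k + 2) := by exact_mod_cast hratio
  rw [Nat.choose_succ_succ' (2 * m + k + 2) m]
  push_cast
  generalize ((2 * m + k + 2).choose m : K) = a at *
  generalize ((2 * m + k + 2).choose (m + 1) : K) = b at *
  have h2 : (m + k + 2 : K) ≠ 0 := by exact_mod_cast (m + k + 1).succ_ne_zero
  have h3 : (m + k + 3 : K) ≠ 0 := by exact_mod_cast (m + k + 2).succ_ne_zero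
  field_simp
  linear_combination hratio'

theorem coeff_map_catalanSeries_pow (m k : ℕ) :
    coeff m (map (Nat.castRingHom K) catalanSeries ^ (k + 1)) =
      ((k + 1 : ℕ) : K) / (m + k + 1 : ℕ) * ((2 * m + k).choose m : ℕ) := by
  set c := map (Nat.castRingHom K) catalanSeries
  have hc : c = 1 + X * c ^ 2 := map_catalanSeries_eq
  induction m generalizing k with
  | zero =>
    rw [coeff_zero_eq_constantCoeff_apply, map_pow, ← coeff_zero_eq_constantCoeff_apply]
    simpa [c] using (div_self (Nat.cast_add_one_ne_zero k)).symm
  | succ m ihm =>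
    induction k with
    | zero => simp [c, cast_catalan_eq, div_eq_inv_mul]
    | succ k ihk =>
      have hsplit : c ^ (k + 2) = c ^ (k + 1) + X * c ^ (k + 3) :=
        calc c ^ (k + 2) = c ^ (k + 1) * (1 + X * c ^ 2) := by rw [← hc, pow_succ]
          _ = c ^ (k + 1) + X * c ^ (k + 3) := by ring
      rw [hsplit, map_add, coeff_succ_X_mul, ihk, ihm]
      convert (ballot_succ_succ (K := K) m k).symm using 3 <;> ring_nf

end PowerSeries

namespace MvPowerSeries

theorem eq_of_pderiv_eq_of_killCompl_eq {σ τ R : Type*} [CommRing R] [IsAddTorsionFree R]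
    {i : τ} {e : σ ↪ τ} (he : ∀ j, j ≠ i → j ∈ Set.range e) {f g : MvPowerSeries τ R}
    (hD : pderiv R i f = pderiv R i g) (hK : killCompl e f = killCompl e g) : f = g := by
  ext d
  by_cases hdi : d i = 0
  · obtain ⟨x, rfl⟩ : d ∈ Set.range (Finsupp.embDomain e) := by
      rw [Finsupp.mem_range_embDomain_iff]
      intro j hj
      exact he j (by rintro rfl; exact Finsupp.mem_support_iff.mp hj hdi)
    rw [← coeff_killCompl, ← coeff_killCompl, hK]
  · have hle : Finsupp.single i 1 ≤ d :=
      Finsupp.single_le_iff.mpr (Nat.one_le_iff_ne_zero.mpr hdi)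
    have h := congr(coeff (d - Finsupp.single i 1) $hD)
    rwa [coeff_pderiv, coeff_pderiv, tsub_add_cancel_of_le hle, Finsupp.coe_tsub, Pi.sub_apply,
      Finsupp.single_eq_same, Nat.cast_sub (Nat.one_le_iff_ne_zero.mpr hdi), Nat.cast_one,
      sub_add_cancel, mul_comm, ← nsmul_eq_mul, mul_comm, ← nsmul_eq_mul, smul_right_inj hdi] at h

end MvPowerSeries

theorem single_zero_add_single_one_apply_zero (a b : ℕ) :
    (Finsupp.single 0 a + Finsupp.single 1 b : Fin 2 →₀ ℕ) 0 = a := by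
  simp

theorem single_zero_add_single_one_apply_one (a b : ℕ) :
    (Finsupp.single 0 a + Finsupp.single 1 b : Fin 2 →₀ ℕ) 1 = b := by
  simp

def finTwoEquivOption : Fin 2 ≃ Option Unit where
  toFun i := if i = 1 then none else some ()
  invFun o := o.elim 1 fun _ => 0
  left_inv := by decide
  right_inv := by decide

section SeriesInZ

variable (R : Type*) [CommSemiring R]

-- `R[[u, z]] ≃ R[[u]][[z]]`: the outer variable is `z = X 1`.
noncomputable def toSeriesInZ : MvPowerSeries (Fin 2) R ≃ₐ[R] PowerSeries (PowerSeries R) :=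
  (renameEquiv R finTwoEquivOption).trans (optionEquivLeft Unit R)

variable {R}

theorem coeff_coeff_toSeriesInZ (F : MvPowerSeries (Fin 2) R) (a b : ℕ) :
    PowerSeries.coeff a (PowerSeries.coeff b (toSeriesInZ R F)) =
      coeff (Finsupp.single 0 a + Finsupp.single 1 b) F := by
  have : (Finsupp.single () a).optionElim b = Finsupp.embDomain finTwoEquivOption.toEmbedding
      (Finsupp.single 0 a + Finsupp.single 1 b) := by
    ext (_ | _) <;> simp [finTwoEquivOption, Finsupp.embDomain_single]
  rw [toSeriesInZ, AlgEquiv.trans_apply, PowerSeries.coeff, coeff_coeff_optionEquivLeft, this]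
  exact coeff_embDomain_rename finTwoEquivOption.toEmbedding F _

theorem toSeriesInZ_X_zero : toSeriesInZ R (X 0) = PowerSeries.C PowerSeries.X := by
  change optionEquivLeft Unit R (rename finTwoEquivOption (X 0)) = _
  rw [rename_X]
  exact optionEquivLeft_X_some ()

theorem toSeriesInZ_X_one : toSeriesInZ R (X 1) = PowerSeries.X := by
  change optionEquivLeft Unit R (rename finTwoEquivOption (X 1)) = _
  rw [rename_X]
  exact optionEquivLeft_X_none

end SeriesInZ

-- `killCompl uAxis` sets `z = X 1` to zero.
def uAxis : Unit ↪ Fin 2 := ⟨fun _ => 0, fun _ _ _ => rfl⟩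

theorem one_notMem_range_uAxis : 1 ∉ Set.range uAxis := by
  rintro ⟨⟨⟩, h⟩
  exact zero_ne_one h

theorem degree_fin_two (d : Fin 2 →₀ ℕ) : d.degree = d 0 + d 1 := by
  rw [Finsupp.degree_eq_sum, Fin.sum_univ_two]

theorem coeff_expOf (f : MvPowerSeries (Fin 2) ℚ) (d : Fin 2 →₀ ℕ) :
    coeff d (expOf f) = ∑ k ∈ Finset.range (d.degree + 1), coeff d (f ^ k) / k.factorial := by
  rw [degree_fin_two]
  rfl

noncomputable def expPartialSum (f : MvPowerSeries (Fin 2) ℚ) (N : ℕ) : MvPowerSeries (Fin 2) ℚ :=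
  ∑ k ∈ Finset.range N, (k.factorial : ℚ)⁻¹ • f ^ k

theorem expPartialSum_succ (f : MvPowerSeries (Fin 2) ℚ) (N : ℕ) :
    expPartialSum f (N + 1) = expPartialSum f N + (N.factorial : ℚ)⁻¹ • f ^ N :=
  Finset.sum_range_succ ..

theorem pderiv_expPartialSum_succ (f : MvPowerSeries (Fin 2) ℚ) (i : Fin 2) (N : ℕ) :
    pderiv ℚ i (expPartialSum f (N + 1)) = expPartialSum f N * pderiv ℚ i f := by
  induction N with
  | zero => simp [expPartialSum]
  | succ N ih =>
    rw [expPartialSum_succ, map_add, ih, expPartialSum_succ f N, add_mul, Derivation.map_smul,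
      pderiv_pow, Nat.add_sub_cancel, mul_assoc, ← nsmul_eq_mul, ← Nat.cast_smul_eq_nsmul ℚ,
      smul_smul, smul_mul_assoc]
    congr 2
    rw [Nat.factorial_succ, Nat.cast_mul, mul_inv, mul_right_comm,
      inv_mul_cancel₀ (by positivity), one_mul]

section ExpOf

variable {f : MvPowerSeries (Fin 2) ℚ} (hf : constantCoeff f = 0)
include hf

-- Terms with `k > degree d` vanish because `f` has no constant term.
theorem coeff_expOf_eq_coeff_expPartialSum {d : Fin 2 →₀ ℕ} {N : ℕ} (hN : d.degree < N) :
    coeff d (expOf f) = coeff d (expPartialSum f N) := by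
  simp only [coeff_expOf, expPartialSum, map_sum, coeff_smul, div_eq_inv_mul]
  refine Finset.sum_subset (Finset.range_subset_range.mpr hN) fun k _ hk => ?_
  rw [coeff_eq_zero_of_constantCoeff_nilpotent (m := 1) (by simpa using hf)
    (by simp at hk; omega), mul_zero]

theorem coeff_expOf_mul_eq_coeff_expPartialSum_mul (g : MvPowerSeries (Fin 2) ℚ)
    {d : Fin 2 →₀ ℕ} {N : ℕ} (hN : d.degree < N) :
    coeff d (expOf f * g) = coeff d (expPartialSum f N * g) := by
  rw [coeff_mul, coeff_mul]
  refine Finset.sum_congr rfl fun p hp => ?_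
  have hdeg := congrArg Finsupp.degree (Finset.HasAntidiagonal.mem_antidiagonal.mp hp)
  rw [map_add] at hdeg
  rw [coeff_expOf_eq_coeff_expPartialSum hf (N := N) (by omega)]

theorem pderiv_expOf (i : Fin 2) : pderiv ℚ i (expOf f) = expOf f * pderiv ℚ i f := by
  ext d
  rw [coeff_pderiv, coeff_expOf_eq_coeff_expPartialSum hf (N := d.degree + 2) (by simp),
    ← coeff_pderiv, pderiv_expPartialSum_succ,
    coeff_expOf_mul_eq_coeff_expPartialSum_mul hf _ (N := d.degree + 1) (by omega)]

end ExpOf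

theorem killCompl_expOf {σ : Type*} {e : σ ↪ Fin 2} {f : MvPowerSeries (Fin 2) ℚ}
    (hf : killCompl e f = 0) : killCompl e (expOf f) = 1 := by
  ext x : 1
  rw [coeff_killCompl, coeff_expOf, Finset.sum_eq_single 0 (fun k _ hk => ?_) (by simp)]
  · rw [pow_zero, ← coeff_killCompl, map_one, Nat.factorial_zero, Nat.cast_one, div_one]
  · rw [← coeff_killCompl, map_pow, hf, zero_pow hk, map_zero, zero_div]

theorem coeff_A (d : Fin 2 →₀ ℕ) :
    coeff d A = if 1 ≤ d 1 ∧ d 1 ≤ d 0 then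
      (1 / (d 0 : ℚ)) * ((2 * (d 0 - 1) - (d 1 - 1)).choose (d 0 - 1) : ℚ) else 0 :=
  rfl

theorem coeff_CatU (d : Fin 2 →₀ ℕ) :
    coeff d CatU = if d 1 = 0 then ((2 * d 0).choose (d 0) : ℚ) / (d 0 + 1) else 0 :=
  rfl

theorem constantCoeff_A : constantCoeff A = 0 := by
  rw [← coeff_zero_eq_constantCoeff_apply, coeff_A]
  simp

theorem killCompl_uAxis_A : killCompl uAxis A = 0 := by
  refine MvPowerSeries.ext fun x => ?_
  rw [coeff_killCompl, map_zero, coeff_A,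
    Finsupp.embDomain_of_notMem_range _ _ _ one_notMem_range_uAxis]
  simp

theorem pderiv_CatU : pderiv ℚ 1 CatU = 0 := by
  ext d : 1
  rw [coeff_pderiv, map_zero, coeff_CatU]
  simp

theorem toSeriesInZ_CatU :
    toSeriesInZ ℚ CatU =
      PowerSeries.C (PowerSeries.map (Nat.castRingHom ℚ) PowerSeries.catalanSeries) := by
  ext b a
  rw [coeff_coeff_toSeriesInZ, PowerSeries.coeff_C, coeff_CatU,
    single_zero_add_single_one_apply_zero, single_zero_add_single_one_apply_one]
  split_ifs <;> simp [cast_catalan_eq]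

theorem toSeriesInZ_pderiv_A :
    toSeriesInZ ℚ (pderiv ℚ 1 A) = PowerSeries.mk fun b =>
      (PowerSeries.X * PowerSeries.map (Nat.castRingHom ℚ) PowerSeries.catalanSeries) ^ (b + 1) := by
  ext b a
  rw [coeff_coeff_toSeriesInZ, coeff_pderiv, add_assoc, ← Finsupp.single_add, coeff_A,
    single_zero_add_single_one_apply_zero, single_zero_add_single_one_apply_one,
    single_zero_add_single_one_apply_one, PowerSeries.coeff_mk, mul_pow,
    PowerSeries.coeff_X_pow_mul']
  by_cases hba : b + 1 ≤ a
  · rw [if_pos ⟨le_add_self, hba⟩, if_pos hba]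
    obtain ⟨n, rfl⟩ : ∃ n, a = n + b + 1 := ⟨a - b - 1, by omega⟩
    rw [show n + b + 1 - (b + 1) = n by omega, PowerSeries.coeff_map_catalanSeries_pow,
      show 2 * (n + b + 1 - 1) - (b + 1 - 1) = n + (n + b) by omega,
      show n + b + 1 - 1 = n + b by omega, ← Nat.choose_symm_add, show n + (n + b) = 2 * n + b by ring]
    push_cast
    ring
  · rw [if_neg (fun h => hba h.2), if_neg hba, zero_mul]

theorem pderiv_A_mul_one_sub : pderiv ℚ 1 A * (1 - X 1 * X 0 * CatU) = X 0 * CatU := by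
  apply (toSeriesInZ ℚ).injective
  simp only [map_mul, map_sub, map_one, toSeriesInZ_pderiv_A, toSeriesInZ_X_zero,
    toSeriesInZ_X_one, toSeriesInZ_CatU]
  rw [mul_assoc PowerSeries.X, ← map_mul, PowerSeries.mk_pow_succ_mul_one_sub_X_mul]

theorem expA_mul_eq_one :
    expOf A * (1 - MvPowerSeries.X 1 * MvPowerSeries.X 0 * CatU) = 1 := by
  refine eq_of_pderiv_eq_of_killCompl_eq (i := 1) (e := uAxis) ?_ ?_ ?_
  · intro j hj
    fin_cases j
    exacts [⟨(), rfl⟩, absurd rfl hj]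
  · have hB : pderiv ℚ 1 (1 - X 1 * X 0 * CatU) = -(X 0 * CatU) := by
      simp [Derivation.leibniz, pderiv_CatU, mul_comm]
    rw [Derivation.leibniz, hB, pderiv_expOf constantCoeff_A, pderiv_one, smul_eq_mul, smul_eq_mul]
    linear_combination expOf A * pderiv_A_mul_one_sub
  · rw [map_mul, killCompl_expOf killCompl_uAxis_A, map_sub, map_one, map_mul, map_mul,
      killCompl_X_eq_zero one_notMem_range_uAxis]
    simp
end

section
/- In ℚ[[u,z]], the identity A(u,z) = log(1/(1 − z·u·Cat(u))) = ∑_{j≥0} (z^{j+1}/(j+1))·(u·Cat(u))^{j+1} holds, where A(u,z) = ∑_{n≥0} ∑_{j=0}^{n} (1/(n+1))·C(2n−j,n)·z^{j+1}·u^{n+1}. -/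
open MvPowerSeries

/-- The Catalan series `Cat(u) = ∑_{n≥0} (1/(n+1))·C(2n,n)·u^n` in one variable. -/
noncomputable def Cat : PowerSeries ℚ :=
  PowerSeries.mk fun n => ((2 * n).choose n : ℚ) / (n + 1)

/-!
`Cat` satisfies `Cat = 1 + u·Cat²`, hence `Cat^(m+1) = Cat^m + u·Cat^(m+2)`. This recursion and
Pascal's rule give the ballot numbers `[u^k] Cat^(m+1) = C(2k+m, k) − C(2k+m, k+m+1)
= (m+1)/(k+m+1) · C(2k+m, k)`. Since `[u^a] (u·Cat)^b = [u^(a-b)] Cat^b`, dividing by `b = m+1`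
at `a = k+m+1` gives exactly the coefficient of `u^a z^b` in `A`.
-/

namespace PowerSeries

theorem constantCoeff_eq_one_of_sq_mul_X_add_one {R : Type*} [Semiring R] {C : R⟦X⟧}
    (hC : C ^ 2 * X + 1 = C) : constantCoeff C = 1 := by
  rw [← hC]; simp

variable {R : Type*} [CommRing R] {C : R⟦X⟧}

/-- The second binomial is `C(2k+m, k-1)` reflected, which avoids truncated subtraction
at `k = 0`. -/
theorem coeff_pow_succ_of_sq_mul_X_add_one (hC : C ^ 2 * X + 1 = C) :
    ∀ k m : ℕ, coeff k (C ^ (m + 1)) =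
      ((2 * k + m).choose k : R) - ((2 * k + m).choose (k + m + 1) : R)
  | 0, m => by
    simp [coeff_zero_eq_constantCoeff, constantCoeff_eq_one_of_sq_mul_X_add_one hC]
  | k + 1, 0 => by
    have pascal₁ := Nat.choose_succ_succ (2 * k + 1) k
    have pascal₂ := Nat.choose_succ_succ (2 * k + 1) (k + 1)
    rw [pow_one, ← hC, map_add, coeff_succ_mul_X, coeff_pow_succ_of_sq_mul_X_add_one hC k 1,
      coeff_one, if_neg k.succ_ne_zero, show 2 * (k + 1) + 0 = 2 * k + 1 + 1 by ring,
      show k + 1 + 0 + 1 = k + 1 + 1 by ring, pascal₁, pascal₂]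
    push_cast
    ring
  | k + 1, m + 1 => by
    have pascal₁ := Nat.choose_succ_succ (2 * k + m + 2) k
    have pascal₂ := Nat.choose_succ_succ (2 * k + m + 2) (k + m + 2)
    have hsplit : C ^ (m + 1 + 1) = C ^ (m + 1) + C ^ (m + 2 + 1) * X := by
      linear_combination -(C ^ (m + 1)) * hC
    rw [hsplit, map_add, coeff_succ_mul_X, coeff_pow_succ_of_sq_mul_X_add_one hC (k + 1) m,
      coeff_pow_succ_of_sq_mul_X_add_one hC k (m + 2),
      show 2 * (k + 1) + (m + 1) = 2 * k + m + 2 + 1 by ring,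
      show k + 1 + (m + 1) + 1 = k + m + 2 + 1 by ring, pascal₁, pascal₂,
      show 2 * (k + 1) + m = 2 * k + m + 2 by ring, show 2 * k + (m + 2) = 2 * k + m + 2 by ring,
      show k + 1 + m + 1 = k + m + 2 by ring, show k + (m + 2) + 1 = k + m + 2 + 1 by ring]
    push_cast
    ring

theorem succ_add_mul_coeff_pow_succ_of_sq_mul_X_add_one (hC : C ^ 2 * X + 1 = C) (k m : ℕ) :
    ((k + m + 1 : ℕ) : R) * coeff k (C ^ (m + 1)) =
      ((m + 1 : ℕ) : R) * (2 * k + m).choose k := by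
  have hsucc := Nat.choose_succ_right_eq (2 * k + m) (k + m)
  rw [show 2 * k + m - (k + m) = k by omega,
    ← Nat.choose_symm_of_eq_add (show 2 * k + m = k + (k + m) by ring)] at hsucc
  rw [coeff_pow_succ_of_sq_mul_X_add_one hC]
  have := congrArg (Nat.cast : ℕ → R) hsucc
  push_cast at this ⊢
  linear_combination -this

end PowerSeries

open PowerSeries

theorem Cat_eq_map_catalanSeries : Cat = PowerSeries.map (Nat.castRingHom ℚ) catalanSeries := by
  ext n
  have h : ((n + 1 : ℕ) : ℚ) * catalan n = (2 * n).choose n := by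
    exact_mod_cast succ_mul_catalan_eq_centralBinom n
  rw [Cat, coeff_mk, PowerSeries.coeff_map, catalanSeries_coeff, eq_comm,
    eq_div_iff (by positivity)]
  push_cast at h ⊢
  linear_combination h

theorem Cat_sq_mul_X_add_one : Cat ^ 2 * PowerSeries.X + 1 = Cat := by
  simpa [Cat_eq_map_catalanSeries] using
    congrArg (PowerSeries.map (Nat.castRingHom ℚ)) catalanSeries_sq_mul_X_add_one

/-- `A(u,z) = log(1/(1−z·u·Cat(u))) = ∑_{j≥0} (z^{j+1}/(j+1))·(u·Cat(u))^{j+1}`: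
the coefficient of `u^a z^b` in `A` is `(1/b)·[u^a]((u·Cat(u))^b)` for `b ≥ 1`
(and `0` for `b = 0`). -/
theorem A_eq_log :
    A = fun d => if 1 ≤ d 1 then
      (1 / (d 1 : ℚ)) * PowerSeries.coeff (d 0) ((PowerSeries.X * Cat) ^ (d 1))
    else 0 := by
  funext d
  rcases eq_or_ne (d 1) 0 with hb₀ | hb₀
  · simp [A, hb₀]
  obtain ⟨m, hb⟩ := Nat.exists_eq_add_one_of_ne_zero hb₀
  rcases lt_or_ge (d 0) (d 1) with hab | hba
  · simp [A, mul_pow, coeff_X_pow_mul', hab.not_ge]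
  obtain ⟨k, ha⟩ : ∃ k, d 0 = k + m + 1 := ⟨d 0 - d 1, by omega⟩
  have key := succ_add_mul_coeff_pow_succ_of_sq_mul_X_add_one Cat_sq_mul_X_add_one k m
  simp only [A, ha, hb, mul_pow, coeff_X_pow_mul']
  rw [if_pos (by omega), if_pos (by omega), if_pos (by omega),
      show k + m + 1 - (m + 1) = k by omega,
      show 2 * (k + m + 1 - 1) - (m + 1 - 1) = 2 * k + m by omega,
      show k + m + 1 - 1 = k + m by omega,
      ← Nat.choose_symm_of_eq_add (show 2 * k + m = k + (k + m) by ring)]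
  push_cast at key ⊢
  rw [one_div_mul_eq_div, one_div_mul_eq_div, div_eq_div_iff (by positivity) (by positivity)]
  linear_combination -key
end

section
/- For all nonnegative integers n, j with j ≤ n, ∑_{i=0}^{2n−j} C(3n−i−j, n)/(1−x)^{i+1} = ∑_{i≥0} C(3n+i−j+1, 2n−j)·x^i as formal power series in x over ℚ. -/
open PowerSeries

lemma inv_one_sub_X_eq : ((1 - PowerSeries.X : ℚ⟦X⟧)⁻¹) = PowerSeries.mk 1 :=
  ((PowerSeries.eq_inv_iff_mul_eq_one (by simp)).mpr
    (PowerSeries.mk_one_mul_one_sub_eq_one ℚ)).symm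

lemma key (n k m : ℕ) :
    ∑ i ∈ Finset.range (m + 1),
      (((k + i).choose k : ℚ)) * (((n + (m - i)).choose n : ℚ))
      = (((n + k + 1 + m).choose (n + k + 1) : ℚ)) := by
  have h : (PowerSeries.mk fun a => ((k + a).choose k : ℚ)) *
      (PowerSeries.mk fun a => ((n + a).choose n : ℚ)) =
      PowerSeries.mk fun a => (((n + k + 1) + a).choose (n + k + 1) : ℚ) := by
    rw [← PowerSeries.mk_one_pow_eq_mk_choose_add, ← PowerSeries.mk_one_pow_eq_mk_choose_add,
      ← PowerSeries.mk_one_pow_eq_mk_choose_add, ← pow_add]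
    ring_nf
  have := congrArg (PowerSeries.coeff (R := ℚ) m) h
  rw [PowerSeries.coeff_mul, PowerSeries.coeff_mk] at this
  simp only [PowerSeries.coeff_mk] at this
  rwa [Finset.Nat.sum_antidiagonal_eq_sum_range_succ
      (f := fun a b => ((k + a).choose k : ℚ) * ((n + b).choose n : ℚ))] at this

theorem sum_inv_one_sub_X_pow (n j : ℕ) (hj : j ≤ n) :
    ∑ i ∈ Finset.range (2 * n - j + 1),
        (PowerSeries.C (R := ℚ) ((3 * n - i - j).choose n : ℚ)) * ((1 - PowerSeries.X)⁻¹) ^ (i + 1)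
      = PowerSeries.mk (fun i => ((3 * n + i - j + 1).choose (2 * n - j) : ℚ)) := by
  set m := 2 * n - j with hm
  ext k
  rw [PowerSeries.coeff_mk, map_sum]
  have hcoeff : ∀ i, (PowerSeries.coeff (R := ℚ) k)
      ((PowerSeries.C (R := ℚ) ((3 * n - i - j).choose n : ℚ)) * ((1 - PowerSeries.X)⁻¹) ^ (i + 1))
      = ((3 * n - i - j).choose n : ℚ) * ((i + k).choose i : ℚ) := by
    intro i
    rw [PowerSeries.coeff_C_mul, inv_one_sub_X_eq, PowerSeries.mk_one_pow_eq_mk_choose_add,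
      PowerSeries.coeff_mk]
  simp only [hcoeff]
  have hsum : ∀ i ∈ Finset.range (m + 1),
      ((3 * n - i - j).choose n : ℚ) * ((i + k).choose i : ℚ)
      = ((k + i).choose k : ℚ) * ((n + (m - i)).choose n : ℚ) := by
    intro i hi
    rw [Finset.mem_range] at hi
    have hi' : i ≤ m := Nat.lt_succ_iff.mp hi
    have h1 : 3 * n - i - j = n + (m - i) := by omega
    have h2 : (i + k).choose i = (k + i).choose k := by
      rw [add_comm i k]; exact Nat.choose_symm_add.symm
    rw [h1, h2]
    ring
  rw [Finset.sum_congr rfl hsum, key n k m]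
  have h3 : (n + k + 1 + m).choose (n + k + 1) = (n + k + 1 + m).choose m :=
    Nat.choose_symm_add
  have h4 : 3 * n + k - j + 1 = n + k + 1 + m := by omega
  rw [h3, h4]
end

section
/- For all nonnegative integers n and i, the identity ∑_{i≥0} C(3n+i−j+1, 2n−j)·x^i = 1/(x^{n+1}(1−x)^{2n−j+1}) − ∑_{ℓ=0}^{n} C(3n−ℓ−j, 2n−j)·x^{−ℓ−1} holds for all 0 ≤ j ≤ n, as an identity of formal Laurent series in x over ℚ. -/
/-!
With `m = 2n - j` and `N = n + 1`, the inverse on the right-hand side is `x^{-N} (1 - x)^{-(m+1)}`, and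
`(1 - x)^{-(m+1)} = ∑ₖ C(m + k, m) xᵏ`. Multiplying this series by `x^{-N}` splits it into a power
series, whose coefficients are `C(m + N + i, m)`, and the principal part formed by its first `N`
terms, which is the finite sum of the statement read backwards.
-/

open PowerSeries

namespace HahnSeries

variable {R : Type*} [Semiring R]

theorem ofPowerSeries_trunc (N : ℕ) (φ : PowerSeries R) :
    ofPowerSeries ℤ R (trunc N φ) =
      ∑ k ∈ Finset.range N, single (k : ℤ) (PowerSeries.coeff k φ) := by
  have hcoe : ((trunc N φ : Polynomial R) : PowerSeries R) =
      ∑ k ∈ Finset.range N, PowerSeries.monomial k (PowerSeries.coeff k φ) := by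
    rw [trunc_apply, ← Finset.range_eq_Ico, ← Polynomial.coeToPowerSeries.ringHom_apply, map_sum]
    simp [Polynomial.coe_monomial]
  rw [hcoe, map_sum]
  refine Finset.sum_congr rfl fun k _ => ?_
  rw [monomial_eq_C_mul_X_pow, map_mul, ofPowerSeries_C, ofPowerSeries_X_pow, C_apply,
    single_mul_single, zero_add, mul_one]

theorem single_neg_mul_ofPowerSeries_mk (f : ℕ → R) (N : ℕ) :
    single (-N : ℤ) 1 * ofPowerSeries ℤ R (PowerSeries.mk f) =
      ofPowerSeries ℤ R (PowerSeries.mk fun i => f (i + N)) +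
        ∑ k ∈ Finset.range N, single ((k : ℤ) - N) (f k) := by
  have hsplit : ofPowerSeries ℤ R (PowerSeries.mk f) = single (N : ℤ) 1 *
      (ofPowerSeries ℤ R (PowerSeries.mk fun i => f (i + N)) +
        ∑ k ∈ Finset.range N, single ((k : ℤ) - N) (f k)) := by
    conv_lhs => rw [eq_X_pow_mul_shift_add_trunc N (PowerSeries.mk f)]
    rw [map_add, map_mul, ofPowerSeries_X_pow, ofPowerSeries_trunc, mul_add, Finset.mul_sum]
    simp only [coeff_mk, single_mul_single, one_mul, add_sub_cancel]
  rw [hsplit, ← mul_assoc, single_mul_single, neg_add_cancel, one_mul, single_zero_one, one_mul]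

theorem inv_ofPowerSeries_X_pow_mul_one_sub_X_pow {K : Type*} [Field K] (N m : ℕ) :
    (ofPowerSeries ℤ K (X ^ N * (1 - X) ^ (m + 1)))⁻¹ =
      single (-N : ℤ) 1 * ofPowerSeries ℤ K (PowerSeries.mk fun k => ((m + k).choose m : K)) := by
  refine inv_eq_of_mul_eq_one_right ?_
  calc ofPowerSeries ℤ K (X ^ N * (1 - X) ^ (m + 1)) *
        (single (-N : ℤ) 1 * ofPowerSeries ℤ K (PowerSeries.mk fun k => ((m + k).choose m : K)))
      = single (N : ℤ) 1 * single (-N : ℤ) 1 * ofPowerSeries ℤ K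
          ((PowerSeries.mk fun k => ((m + k).choose m : K)) * (1 - X) ^ (m + 1)) := by
        rw [map_mul, map_mul, ofPowerSeries_X_pow]; ring
    _ = 1 := by
        rw [mk_add_choose_mul_one_sub_pow_eq_one, single_mul_single, add_neg_cancel, mul_one,
          single_zero_one, map_one, one_mul]

end HahnSeries

theorem laurent_identity_quartic (n j : ℕ) (hj : j ≤ n) :
    (HahnSeries.ofPowerSeries ℤ ℚ
        (PowerSeries.mk fun i => ((3 * n + i - j + 1).choose (2 * n - j) : ℚ)))
      = (HahnSeries.ofPowerSeries ℤ ℚ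
            (PowerSeries.X ^ (n + 1) * (1 - PowerSeries.X) ^ (2 * n - j + 1)))⁻¹
        - ∑ ℓ ∈ Finset.range (n + 1),
            HahnSeries.single (-(ℓ + 1) : ℤ) (((3 * n - ℓ - j).choose (2 * n - j) : ℚ)) := by
  set m := 2 * n - j
  have hseries : (PowerSeries.mk fun i => ((3 * n + i - j + 1).choose m : ℚ)) =
      PowerSeries.mk fun i => ((m + (i + (n + 1))).choose m : ℚ) := by
    ext i
    simp only [coeff_mk]
    congr 2
    omega
  have hprincipal :
      ∑ ℓ ∈ Finset.range (n + 1), HahnSeries.single (-(ℓ + 1) : ℤ) ((3 * n - ℓ - j).choose m : ℚ) =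
        ∑ k ∈ Finset.range (n + 1),
          HahnSeries.single ((k : ℤ) - (n + 1 : ℕ)) ((m + k).choose m : ℚ) := by
    rw [← Finset.sum_range_reflect]
    refine Finset.sum_congr rfl fun ℓ hℓ => ?_
    rw [Finset.mem_range] at hℓ
    congr 3 <;> omega
  rw [hseries, hprincipal, HahnSeries.inv_ofPowerSeries_X_pow_mul_one_sub_X_pow,
    HahnSeries.single_neg_mul_ofPowerSeries_mk, add_sub_cancel_right]
end

section
/- Let Ω(r) = ∑_{n≥0} (1/(n+1))·C(2n,n)·C(3n,n)·r^{n+1} as a formal power series over ℚ. Then Ω satisfies the linear differential equation 6·Ω(r) + r·(27r − 1)·Ω''(r) = 0. -/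
open PowerSeries

noncomputable def Omega : PowerSeries ℚ :=
  PowerSeries.mk fun m => if m = 0 then 0 else
    (1 / (m : ℚ)) * ((2 * (m - 1)).choose (m - 1) : ℚ) * ((3 * (m - 1)).choose (m - 1) : ℚ)

/-!
Writing `Ω = ∑ cₙ rⁿ⁺¹ / (n + 1)` with `cₙ = C(2n,n)·C(3n,n) = (3n)! / n!³`, the coefficient of
`rⁿ⁺¹` in `6Ω + r(27r - 1)Ω''` is `(6 + 27n(n+1)) cₙ / (n+1) - (n+1) cₙ₊₁`, and this vanishes by
the hypergeometric recurrence `(n+1)² cₙ₊₁ = 3(3n+1)(3n+2) cₙ`, read off from `(3n+3)! / (3n)!`.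
-/

namespace Nat

theorem choose_two_mul_mul_choose_three_mul_mul_factorial_pow (n : ℕ) :
    (2 * n).choose n * (3 * n).choose n * n ! ^ 3 = (3 * n)! := by
  have h₂ := add_choose_mul_factorial_mul_factorial n n
  have h₃ := add_choose_mul_factorial_mul_factorial (2 * n) n
  rw [← two_mul] at h₂
  rw [show 2 * n + n = 3 * n by ring] at h₃
  rw [← h₃, ← h₂]
  ring

theorem choose_two_mul_mul_choose_three_mul_succ (n : ℕ) :
    (n + 1) ^ 2 * ((2 * (n + 1)).choose (n + 1) * (3 * (n + 1)).choose (n + 1)) =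
      3 * (3 * n + 1) * (3 * n + 2) * ((2 * n).choose n * (3 * n).choose n) := by
  refine Nat.eq_of_mul_eq_mul_right (by positivity : 0 < (n + 1) * n ! ^ 3) ?_
  have hsucc := choose_two_mul_mul_choose_three_mul_mul_factorial_pow (n + 1)
  have h := choose_two_mul_mul_choose_three_mul_mul_factorial_pow n
  rw [show 3 * (n + 1) = 3 * n + 2 + 1 by ring, factorial_succ (3 * n + 2),
    factorial_succ (3 * n + 1), factorial_succ (3 * n), ← h, factorial_succ n] at hsucc
  linear_combination hsucc

end Nat

namespace PowerSeries

variable {R : Type*} [CommRing R]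

theorem coeff_derivative_derivative (f : R⟦X⟧) (n : ℕ) :
    coeff n (d⁄dX R (d⁄dX R f)) = coeff (n + 2) f * (n + 2) * (n + 1) := by
  rw [coeff_derivative, coeff_derivative]
  push_cast
  ring

theorem coeff_X_mul_derivative_derivative (f : R⟦X⟧) (n : ℕ) :
    coeff n (X * d⁄dX R (d⁄dX R f)) = coeff (n + 1) f * (n + 1) * n := by
  rcases n with _ | n
  · simp
  · rw [coeff_succ_X_mul, coeff_derivative_derivative]
    push_cast
    ring

theorem coeff_X_sq_mul_derivative_derivative (f : R⟦X⟧) (n : ℕ) :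
    coeff n (X ^ 2 * d⁄dX R (d⁄dX R f)) = coeff n f * n * (n - 1) := by
  rw [pow_two, mul_assoc]
  rcases n with _ | n
  · simp
  · rw [coeff_succ_X_mul, coeff_X_mul_derivative_derivative]
    push_cast
    ring

end PowerSeries

theorem coeff_zero_Omega : coeff 0 Omega = 0 := by
  simp [Omega]

theorem coeff_succ_Omega (n : ℕ) :
    coeff (n + 1) Omega = ((2 * n).choose n * (3 * n).choose n : ℚ) / (n + 1) := by
  simp only [Omega, coeff_mk, Nat.add_sub_cancel, if_neg n.succ_ne_zero]
  push_cast
  ring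

theorem omega_ode : 6 * Omega
    + PowerSeries.X * (27 * PowerSeries.X - 1) * (d⁄dX ℚ) ((d⁄dX ℚ) Omega) = 0 := by
  have hsplit : ∀ g : ℚ⟦X⟧, X * (27 * X - 1) * g = C 27 * (X ^ 2 * g) - X * g := fun g => by
    rw [map_ofNat C 27]
    ring
  ext n
  rw [hsplit, ← map_ofNat C 6, map_add, map_sub, coeff_C_mul, coeff_C_mul,
    coeff_X_sq_mul_derivative_derivative, coeff_X_mul_derivative_derivative, map_zero]
  rcases n with _ | n
  · simp [coeff_zero_Omega]
  · have hrec := congrArg (Nat.cast (R := ℚ)) (Nat.choose_two_mul_mul_choose_three_mul_succ n)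
    rw [coeff_succ_Omega, coeff_succ_Omega]
    push_cast at hrec ⊢
    field_simp
    linear_combination -hrec
end

section
/- Let R be the unique formal power series in ℚ[[t]] with zero constant term satisfying t = ∑_{n≥0} (1/(n+1))·C(2n,n)²·R^{n+1}. Then R satisfies the differential equation R·(16R − 1)·R'' = 4t·(R')³. -/
/-!
Write `f(r) = ∑ C(2n,n)² rⁿ` (`centralBinomSqSeries`), so that `Ω' = f` (`Ω` is
`centralBinomSqAntideriv`). The ratio `C(2n+2,n+1)/C(2n,n) = 2(2n+1)/(n+1)`
gives the hypergeometric relation `r(1 - 16r) f'(r) = 4 Ω(r)`. Substituting `R`, where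
`Ω(R) = X`, the chain rule gives `f(R) R' = 1` and the relation becomes `R(1 - 16R) f'(R) = 4X`.
Differentiating `f(R) R' = 1` gives `f(R) R'' = -f'(R) R'²`; multiplying by `R(16R - 1)` and using
both identities, `f(R)` times the claimed equation holds, and `f(R)` is invertible.
-/

open PowerSeries

theorem coeff_X_mul_derivative {R : Type*} [CommSemiring R] (f : R⟦X⟧) (n : ℕ) :
    coeff n (X * d⁄dX R f) = n * coeff n f := by
  cases n with
  | zero => simp
  | succ n => rw [coeff_succ_X_mul, coeff_derivative, mul_comm]; push_cast; ring

theorem coeff_subst_eq_sum_range {R : Type*} [CommRing R] {a : R⟦X⟧}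
    (ha : constantCoeff a = 0) (f : R⟦X⟧) (m : ℕ) :
    coeff m (f.subst a) = ∑ d ∈ Finset.range (m + 1), coeff d f * coeff m (a ^ d) := by
  rw [coeff_subst' (HasSubst.of_constantCoeff_zero' ha)]
  refine finsum_eq_sum_of_support_subset _ fun d hd => ?_
  rw [Finset.coe_range, Set.mem_Iio, Nat.lt_succ_iff]
  by_contra! hmd
  apply hd
  simp only [X_pow_dvd_iff.1 (pow_dvd_pow_of_dvd (X_dvd_iff.2 ha) d) m hmd, smul_zero]

theorem centralBinom_succ_sq {K : Type*} [CommRing K] (n : ℕ) :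
    ((n : K) + 1) ^ 2 * ((n + 1).centralBinom : K) ^ 2
      = 4 * (2 * n + 1) ^ 2 * (n.centralBinom : K) ^ 2 := by
  have h := congrArg (Nat.cast : ℕ → K) (Nat.succ_mul_centralBinom_succ n)
  push_cast at h
  linear_combination (((n : K) + 1) * (n + 1).centralBinom + 2 * (2 * n + 1) * n.centralBinom) * h

noncomputable def centralBinomSqSeries : ℚ⟦X⟧ := mk fun n => (n.centralBinom : ℚ) ^ 2

noncomputable def centralBinomSqAntideriv : ℚ⟦X⟧ :=
  X * mk fun n => (n.centralBinom : ℚ) ^ 2 / (n + 1)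

theorem derivative_centralBinomSqAntideriv :
    d⁄dX ℚ centralBinomSqAntideriv = centralBinomSqSeries := by
  ext n
  rw [centralBinomSqAntideriv, coeff_derivative, coeff_succ_X_mul, coeff_mk,
    centralBinomSqSeries, coeff_mk]
  field_simp

theorem X_mul_one_sub_mul_derivative_centralBinomSqSeries :
    X * (1 - 16 * X) * d⁄dX ℚ centralBinomSqSeries = 4 * centralBinomSqAntideriv := by
  have hC (q : ℕ) [q.AtLeastTwo] : (OfNat.ofNat q : ℚ⟦X⟧) = C (OfNat.ofNat q) := rfl
  ext n
  cases n with
  | zero => simp [centralBinomSqAntideriv]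
  | succ n =>
    rw [mul_assoc, coeff_succ_X_mul, sub_mul, one_mul, mul_assoc, hC 16, hC 4, map_sub,
      coeff_C_mul, coeff_C_mul, coeff_X_mul_derivative, coeff_derivative,
      centralBinomSqAntideriv, coeff_succ_X_mul]
    simp only [centralBinomSqSeries, coeff_mk]
    field_simp
    linear_combination centralBinom_succ_sq (K := ℚ) n

theorem mul_one_sub_mul_subst_derivative_centralBinomSqSeries {R : ℚ⟦X⟧} (hR : HasSubst R) :
    R * (1 - 16 * R) * (d⁄dX ℚ centralBinomSqSeries).subst R
      = 4 * centralBinomSqAntideriv.subst R := by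
  have h := congrArg (substAlgHom hR) X_mul_one_sub_mul_derivative_centralBinomSqSeries
  simp only [map_mul, map_sub, map_one, map_ofNat, coe_substAlgHom, subst_X hR] at h
  exact h

theorem subst_centralBinomSqAntideriv_eq_X {R : ℚ⟦X⟧} (h0 : constantCoeff R = 0)
    (hR : ∀ m : ℕ, coeff m (X : ℚ⟦X⟧) = ∑ n ∈ Finset.range m,
      (1 / (n + 1 : ℚ)) * ((2 * n).choose n : ℚ) ^ 2 * coeff m (R ^ (n + 1))) :
    centralBinomSqAntideriv.subst R = X := by
  ext m
  rw [hR m, coeff_subst_eq_sum_range h0, Finset.sum_range_succ']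
  simp [centralBinomSqAntideriv, coeff_succ_X_mul, Nat.centralBinom_eq_two_mul_choose,
    div_eq_inv_mul]

theorem R_ode_general (R : PowerSeries ℚ)
    (h0 : PowerSeries.constantCoeff R = 0)
    (hR : ∀ m : ℕ, PowerSeries.coeff m (PowerSeries.X : PowerSeries ℚ)
      = ∑ n ∈ Finset.range m,
          (1 / (n + 1 : ℚ)) * ((2 * n).choose n : ℚ) ^ 2
            * PowerSeries.coeff m (R ^ (n + 1))) :
    R * (16 * R - 1) * (d⁄dX ℚ) ((d⁄dX ℚ) R)
      = 4 * PowerSeries.X * ((d⁄dX ℚ) R) ^ 3 := by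
  have hs : HasSubst R := HasSubst.of_constantCoeff_zero' h0
  have hΩ := subst_centralBinomSqAntideriv_eq_X h0 hR
  have hinv : centralBinomSqSeries.subst R * d⁄dX ℚ R = 1 := by
    rw [← derivative_centralBinomSqAntideriv, ← derivative_subst hs, hΩ, derivative_X]
  have hode := mul_one_sub_mul_subst_derivative_centralBinomSqSeries hs
  rw [hΩ] at hode
  set g : ℚ⟦X⟧ := centralBinomSqSeries.subst R
  have hdiff : g * d⁄dX ℚ (d⁄dX ℚ R)
      + (d⁄dX ℚ centralBinomSqSeries).subst R * (d⁄dX ℚ R) ^ 2 = 0 := by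
    have h := congrArg (d⁄dX ℚ) hinv
    rw [Derivation.leibniz, derivative_subst hs, derivative_one, smul_eq_mul, smul_eq_mul] at h
    linear_combination h
  apply mul_left_cancel₀ (left_ne_zero_of_mul_eq_one hinv)
  linear_combination (R * (16 * R - 1)) * hdiff + (d⁄dX ℚ R) ^ 2 * hode
    - 4 * X * (d⁄dX ℚ R) ^ 2 * hinv
end

section
/- There exists a unique formal power series R ∈ ℚ[[t]] with zero constant term such that t = ∑_{n≥0} (1/(n+1))·C(2n,n)·C(3n,n)·R^{n+1}, and its first coefficients are R = t − 3t² − 12t³ − 105t⁴ − 1206t⁵ + O(t⁶). -/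
/-!
Reading `∑ₙ cₙ R^{n+1} = X` coefficientwise, the equation in degree `m` is
`coeff m R = coeff m X - ∑_{1 ≤ n < m} cₙ coeff m (R^{n+1})` (using `c₀ = 1`), and since
`R^{n+1} - S^{n+1} = (R - S) R^n + S (R^n - S^n)`, for `n ≥ 1` and `R`, `S` without constant term
the right-hand side only depends on the coefficients of `R` below degree `m`. So `R` is the fixed
point of a map that is contracting for the `X`-adic filtration, which exists (built coefficient by
coefficient) and is unique. The first coefficients are read off the equations in degrees `1, …, 5`
one after the other.
-/

open PowerSeries Finset

theorem pow_succ_dvd_pow_succ_sub_pow_succ {α : Type*} [CommRing α] {x a b : α} {m n : ℕ}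
    (ha : x ∣ a) (hb : x ∣ b) (hab : x ^ m ∣ a - b) (hn : n ≠ 0) :
    x ^ (m + 1) ∣ a ^ (n + 1) - b ^ (n + 1) := by
  have hsplit : a ^ (n + 1) - b ^ (n + 1) = (a - b) * a ^ n + b * (a ^ n - b ^ n) := by ring
  rw [hsplit, pow_succ]
  exact dvd_add (mul_dvd_mul hab (dvd_pow ha hn))
    (mul_comm (x ^ m) x ▸ mul_dvd_mul hb (hab.trans (sub_dvd_pow_sub_pow a b n)))

namespace PowerSeries

section FixedPoint

variable {A : Type*} [Ring A] (Φ : A⟦X⟧ → A⟦X⟧)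

noncomputable def fixedPointCoeff : ℕ → A
  | m => coeff m (Φ (mk fun k ↦ if _ : k < m then fixedPointCoeff k else 0))

variable {Φ}
variable (hcontr : ∀ m R S, X ∣ R → X ∣ S → X ^ m ∣ R - S → X ^ (m + 1) ∣ Φ R - Φ S)
include hcontr

theorem exists_fixedPoint (hΦ : ∀ R, X ∣ R → X ∣ Φ R) : ∃ R, X ∣ R ∧ Φ R = R := by
  set r := fixedPointCoeff Φ
  set T : ℕ → A⟦X⟧ := fun m ↦ mk fun k ↦ if k < m then r k else 0 with hT
  have hTr : ∀ m, coeff m (Φ (T m)) = r m := fun m ↦ by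
    rw [show r m = _ from fixedPointCoeff.eq_1 Φ m]
    simp [hT, r]
  have hr0 : r 0 = 0 := by
    rw [← hTr, coeff_zero_eq_constantCoeff_apply, ← X_dvd_iff]
    exact hΦ _ (X_dvd_iff.mpr (by simp [hT]))
  have hT_dvd : ∀ m, X ∣ T m := fun m ↦ X_dvd_iff.mpr (by simp [hT, hr0])
  have hR_dvd : X ∣ mk r := X_dvd_iff.mpr (by simp [hr0])
  have hRT : ∀ m, X ^ m ∣ mk r - T m := fun m ↦ X_pow_dvd_iff.mpr fun k hk ↦ by simp [hT, hk]
  refine ⟨mk r, hR_dvd, ?_⟩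
  ext m
  have hm := X_pow_dvd_iff.mp (hcontr m _ _ hR_dvd (hT_dvd m) (hRT m)) m m.lt_succ_self
  rw [map_sub, sub_eq_zero, hTr] at hm
  simpa using hm

theorem eq_of_fixedPoint {R S : A⟦X⟧} (hR : X ∣ R) (hS : X ∣ S) (hfR : Φ R = R)
    (hfS : Φ S = S) : R = S := by
  have hRS : ∀ m, X ^ m ∣ R - S := by
    intro m
    induction m with
    | zero => simp
    | succ m ih =>
      rw [← hfR, ← hfS]
      exact hcontr m R S hR hS ih
  ext m
  simpa [sub_eq_zero] using X_pow_dvd_iff.mp (hRS (m + 1)) m m.lt_succ_self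

theorem existsUnique_fixedPoint (hΦ : ∀ R, X ∣ R → X ∣ Φ R) : ∃! R, X ∣ R ∧ Φ R = R :=
  let ⟨R, hR, hfR⟩ := exists_fixedPoint hcontr hΦ
  ⟨R, ⟨hR, hfR⟩, fun _ ⟨hS, hfS⟩ ↦ eq_of_fixedPoint hcontr hS hR hfS hfR⟩

end FixedPoint

section Inversion

variable {A : Type*} [CommRing A] (c : ℕ → A)

/-- `∑ₙ c n • R ^ (n + 1) = X`, read coefficientwise: for `constantCoeff R = 0` the terms with
`n ≥ m` do not contribute to `coeff m`. -/
def IsCompInverse (R : A⟦X⟧) : Prop :=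
  ∀ m, coeff m X = ∑ n ∈ range m, c n * coeff m (R ^ (n + 1))

noncomputable def inversionStep (R : A⟦X⟧) : A⟦X⟧ :=
  mk fun m ↦ coeff m X - ∑ n ∈ Ico 1 m, c n * coeff m (R ^ (n + 1))

theorem X_dvd_inversionStep (R : A⟦X⟧) : X ∣ inversionStep c R :=
  X_dvd_iff.mpr (by rw [← coeff_zero_eq_constantCoeff_apply]; simp [inversionStep])

theorem coeff_pow_succ_eq_of_X_pow_dvd_sub {R S : A⟦X⟧} {m n : ℕ} (hR : X ∣ R) (hS : X ∣ S)
    (hRS : X ^ m ∣ R - S) (hn : n ≠ 0) : coeff m (R ^ (n + 1)) = coeff m (S ^ (n + 1)) := by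
  rw [← sub_eq_zero, ← map_sub]
  exact X_pow_dvd_iff.mp (pow_succ_dvd_pow_succ_sub_pow_succ hR hS hRS hn) m m.lt_succ_self

theorem X_pow_succ_dvd_inversionStep_sub {R S : A⟦X⟧} {m : ℕ} (hR : X ∣ R) (hS : X ∣ S)
    (hRS : X ^ m ∣ R - S) : X ^ (m + 1) ∣ inversionStep c R - inversionStep c S := by
  refine X_pow_dvd_iff.mpr fun k hk ↦ ?_
  rw [map_sub, sub_eq_zero, inversionStep, inversionStep, coeff_mk, coeff_mk]
  congr 1
  refine sum_congr rfl fun n hn ↦ ?_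
  have hRS' : X ^ k ∣ R - S := (pow_dvd_pow X (Nat.le_of_lt_succ hk)).trans hRS
  rw [coeff_pow_succ_eq_of_X_pow_dvd_sub hR hS hRS' (by rw [mem_Ico] at hn; omega)]

theorem coeff_pow_succ_eq_sum_range (R : A⟦X⟧) (m n : ℕ) :
    coeff m (R ^ (n + 1)) = ∑ i ∈ range (m + 1), coeff i R * coeff (m - i) (R ^ n) := by
  rw [pow_succ', coeff_mul, Nat.sum_antidiagonal_eq_sum_range_succ_mk]

variable {c} (hc : c 0 = 1)
include hc

theorem inversionStep_eq_self_iff {R : A⟦X⟧} (hR : X ∣ R) :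
    inversionStep c R = R ↔ IsCompInverse c R := by
  rw [PowerSeries.ext_iff]
  refine forall_congr' fun m ↦ ?_
  rcases Nat.eq_zero_or_pos m with rfl | hm
  · simp [inversionStep, ← X_dvd_iff.mp hR]
  · rw [inversionStep, coeff_mk, range_eq_Ico, sum_eq_sum_Ico_succ_bot hm, hc, zero_add, pow_one,
      one_mul, sub_eq_iff_eq_add]

theorem existsUnique_isCompInverse : ∃! R : A⟦X⟧, constantCoeff R = 0 ∧ IsCompInverse c R := by
  obtain ⟨R, ⟨hR, hfR⟩, huniq⟩ := existsUnique_fixedPoint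
    (fun _ _ _ ↦ X_pow_succ_dvd_inversionStep_sub c) (fun R _ ↦ X_dvd_inversionStep c R)
  refine ⟨R, ⟨X_dvd_iff.mp hR, (inversionStep_eq_self_iff hc hR).mp hfR⟩, ?_⟩
  rintro S ⟨hS, hSinv⟩
  exact huniq S ⟨X_dvd_iff.mpr hS, (inversionStep_eq_self_iff hc (X_dvd_iff.mpr hS)).mpr hSinv⟩

theorem IsCompInverse.coeff_one_to_five {R : A⟦X⟧} (hR : constantCoeff R = 0)
    (hRc : IsCompInverse c R) :
    coeff 1 R = 1 ∧ coeff 2 R = -c 1 ∧ coeff 3 R = 2 * c 1 ^ 2 - c 2 ∧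
      coeff 4 R = 5 * c 1 * c 2 - 5 * c 1 ^ 3 - c 3 ∧
      coeff 5 R = 14 * c 1 ^ 4 - 21 * c 1 ^ 2 * c 2 + 6 * c 1 * c 3 + 3 * c 2 ^ 2 - c 4 := by
  have e1 := hRc 1
  have e2 := hRc 2
  have e3 := hRc 3
  have e4 := hRc 4
  have e5 := hRc 5
  simp only [coeff_X, coeff_one, coeff_pow_succ_eq_sum_range, pow_zero, sum_range_succ, range_zero,
    sum_empty, coeff_zero_eq_constantCoeff, map_pow, hR, hc, Nat.reduceAdd, Nat.reduceSub,
    Nat.reduceEqDiff, reduceIte, zero_add] at e1 e2 e3 e4 e5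
  have h1 : coeff 1 R = 1 := by linear_combination -e1
  rw [h1] at e2 e3 e4 e5
  have h2 : coeff 2 R = -c 1 := by linear_combination -e2
  rw [h2] at e3 e4 e5
  have h3 : coeff 3 R = 2 * c 1 ^ 2 - c 2 := by linear_combination -e3
  rw [h3] at e4 e5
  have h4 : coeff 4 R = 5 * c 1 * c 2 - 5 * c 1 ^ 3 - c 3 := by linear_combination -e4
  rw [h4] at e5
  exact ⟨h1, h2, h3, h4, by linear_combination -e5⟩

end Inversion

end PowerSeries

theorem R_exists_unique_quartic :
    (∃! R : PowerSeries ℚ, PowerSeries.constantCoeff R = 0 ∧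
      ∀ m : ℕ, PowerSeries.coeff m (PowerSeries.X : PowerSeries ℚ)
        = ∑ n ∈ Finset.range m,
            (1 / (n + 1 : ℚ)) * ((2 * n).choose n : ℚ) * ((3 * n).choose n : ℚ)
              * PowerSeries.coeff m (R ^ (n + 1)))
    ∧ ∀ R : PowerSeries ℚ, PowerSeries.constantCoeff R = 0 →
      (∀ m : ℕ, PowerSeries.coeff m (PowerSeries.X : PowerSeries ℚ)
        = ∑ n ∈ Finset.range m,
            (1 / (n + 1 : ℚ)) * ((2 * n).choose n : ℚ) * ((3 * n).choose n : ℚ)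
              * PowerSeries.coeff m (R ^ (n + 1))) →
      PowerSeries.coeff 1 R = 1 ∧ PowerSeries.coeff 2 R = -3 ∧
      PowerSeries.coeff 3 R = -12 ∧ PowerSeries.coeff 4 R = -105 ∧
      PowerSeries.coeff 5 R = -1206 := by
  set c : ℕ → ℚ := fun n ↦ (1 / (n + 1 : ℚ)) * ((2 * n).choose n : ℚ) * ((3 * n).choose n : ℚ)
  have hc : c 0 = 1 := by simp [c]
  refine ⟨existsUnique_isCompInverse hc, fun R hR hRc ↦ ?_⟩
  obtain ⟨h1, h2, h3, h4, h5⟩ := IsCompInverse.coeff_one_to_five hc hR hRc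
  refine ⟨h1, ?_, ?_, ?_, ?_⟩ <;> norm_num [h2, h3, h4, h5, c, Nat.choose]
end

section
/- For each n ≥ 0, the inner double sum collapses: ∑_{j=0}^{n} (1/(n+1))·C(2n−j, n)·C(3n−j+1, 2n−j) = (3n+2)/(2(n+1)²)·C(2n,n)·C(3n+1, 2n). -/
/-!
Write `k = n - j`. The `j`-th term is `C(n+k, n) C(2n+1+k, n+k)`, and both this and
`C(2n+1, n) C(2n+1+k, 2n+1)` count the trinomial coefficient `(2n+1+k)! / (n! k! (n+1)!)`.
Hence the sum is `C(2n+1, n)` times the hockey-stick sum `∑ₖ C(2n+1+k, 2n+1) = C(3n+2, 2n+2)`.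
Absorption, `(2n+2) C(3n+2, 2n+2) = (3n+2) C(3n+1, 2n+1)`, and the same trinomial exchange with
`k = n` turn this into the closed form.
-/

open Finset

namespace Nat

theorem choose_mul_choose_add_comm (a b c : ℕ) :
    (a + b).choose a * (a + b + c).choose (a + b)
      = (a + c).choose a * (a + b + c).choose (a + c) := by
  have hb := choose_mul (n := a + b + c) (k := a + b) (s := a) (by omega)
  have hc := choose_mul (n := a + b + c) (k := a + c) (s := a) (by omega)
  rw [show a + b + c - a = b + c by omega, Nat.add_sub_cancel_left] at hb hc
  rw [mul_comm, hb, mul_comm ((a + c).choose a), hc, choose_symm_add]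

theorem sum_range_choose_mul_choose (a c m : ℕ) :
    ∑ k ∈ range (m + 1), (a + k).choose a * (a + k + c).choose (a + k)
      = (a + c).choose a * (m + (a + c) + 1).choose (a + c + 1) := by
  rw [← sum_range_add_choose, mul_sum]
  refine sum_congr rfl fun k _ => ?_
  rw [choose_mul_choose_add_comm, add_right_comm a k c, add_comm (a + c) k]

theorem sum_range_choose_two_mul_sub_mul_choose (n : ℕ) :
    ∑ j ∈ range (n + 1), (2 * n - j).choose n * (3 * n - j + 1).choose (2 * n - j)
      = (2 * n + 1).choose n * (3 * n + 2).choose (2 * n + 2) := by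
  let f k := (n + k).choose n * (n + k + (n + 1)).choose (n + k)
  calc _ = ∑ j ∈ range (n + 1), f (n + 1 - 1 - j) := by
          refine sum_congr rfl fun j hj => ?_
          have hjn := mem_range.1 hj
          simp only [f]
          rw [show n + (n + 1 - 1 - j) = 2 * n - j by omega,
            show 2 * n - j + (n + 1) = 3 * n - j + 1 by omega]
    _ = ∑ j ∈ range (n + 1), f j := sum_range_reflect f _
    _ = _ := by
          rw [sum_range_choose_mul_choose]
          ring_nf

theorem two_mul_succ_mul_choose_mul_choose (n : ℕ) :
    2 * (n + 1) * ((2 * n + 1).choose n * (3 * n + 2).choose (2 * n + 2))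
      = (3 * n + 2) * ((2 * n).choose n * (3 * n + 1).choose (2 * n)) := by
  have habsorb : (3 * n + 2) * (3 * n + 1).choose (2 * n + 1)
      = (3 * n + 2).choose (2 * n + 2) * (2 * n + 2) :=
    add_one_mul_choose_eq (3 * n + 1) (2 * n + 1)
  have hexchange : (2 * n).choose n * (3 * n + 1).choose (2 * n)
      = (2 * n + 1).choose n * (3 * n + 1).choose (2 * n + 1) := by
    convert choose_mul_choose_add_comm n n (n + 1) using 3 <;> ring
  rw [hexchange, mul_left_comm (3 * n + 2), habsorb]
  ring

end Nat

theorem choose_sum_identity_16 (n : ℕ) :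
    ∑ j ∈ Finset.range (n + 1),
        (1 / (n + 1 : ℚ)) * ((2 * n - j).choose n : ℚ) * ((3 * n - j + 1).choose (2 * n - j) : ℚ)
      = ((3 * n + 2 : ℚ) / (2 * (n + 1 : ℚ) ^ 2))
          * ((2 * n).choose n : ℚ) * ((3 * n + 1).choose (2 * n) : ℚ) := by
  have hsum := Nat.sum_range_choose_two_mul_sub_mul_choose n
  have hclosed := Nat.two_mul_succ_mul_choose_mul_choose n
  qify at hsum hclosed
  simp_rw [mul_assoc, ← mul_sum, hsum]
  field_simp
  linear_combination hclosed
end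

section
/- Define Q(t) := (1/(3t²))·(t − 3t² − R(t)) where R ∈ ℚ[[t]] is the unique series with zero constant term satisfying t = ∑_{n≥0} (1/(n+1))·C(2n,n)·C(3n,n)·R^{n+1}. Then the coefficients of t, t², t³ in Q are 4, 35, 402 respectively. -/
/-!
With `Ω(r) = r + 3 r² + 30 r³ + 420 r⁴ + 6930 r⁵ + ⋯`, comparing coefficients of `t, …, t⁵` in
`Ω(R(t)) = t` determines `R = t - 3t² - 12t³ - 105t⁴ - 1206t⁵ + ⋯` one coefficient at a time, and
`3t²·Q = t - 3t² - R` then reads off `Q = 4t + 35t² + 402t³ + ⋯` from `-1/3` times the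
coefficients of `t³, t⁴, t⁵` in `R`.
-/

open PowerSeries

theorem three_mul_coeff_succ_eq_neg_coeff {A : Type*} [CommRing A] {R Q : A⟦X⟧}
    (hQ : 3 * X ^ 2 * Q = X - 3 * X ^ 2 - R) (d : ℕ) :
    3 * coeff (d + 1) Q = -coeff (d + 3) R := by
  have h := congrArg (coeff (d + 1 + 2)) hQ
  rw [mul_right_comm, coeff_mul_X_pow, ← map_ofNat C, coeff_C_mul] at h
  simpa [coeff_X, coeff_X_pow] using h

theorem coeffs_of_omega_comp_eq_X {R : ℚ⟦X⟧} (h0 : constantCoeff R = 0)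
    (hR : ∀ m : ℕ, coeff m (X : ℚ⟦X⟧) = ∑ n ∈ Finset.range m,
      (1 / (n + 1 : ℚ)) * ((2 * n).choose n : ℚ) * ((3 * n).choose n : ℚ) * coeff m (R ^ (n + 1))) :
    coeff 1 R = 1 ∧ coeff 2 R = -3 ∧ coeff 3 R = -12 ∧ coeff 4 R = -105 ∧
      coeff 5 R = -1206 := by
  have hc0 : coeff 0 R = 0 := by rwa [coeff_zero_eq_constantCoeff]
  have e1 := hR 1
  have e2 := hR 2
  have e3 := hR 3
  have e4 := hR 4
  have e5 := hR 5
  -- As `R` has no constant term, the equation for `tᵐ` is `coeff m R` plus terms in lower coefficients.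
  simp only [Finset.sum_range_succ, pow_succ, coeff_mul,
    Finset.Nat.sum_antidiagonal_eq_sum_range_succ_mk, coeff_X, hc0] at e1 e2 e3 e4 e5
  norm_num [Nat.choose] at e1 e2 e3 e4 e5
  have r1 : coeff 1 R = 1 := e1.symm
  have r2 : coeff 2 R = -3 := by rw [r1] at e2; linarith
  have r3 : coeff 3 R = -12 := by rw [r1, r2] at e3; linarith
  have r4 : coeff 4 R = -105 := by rw [r1, r2, r3] at e4; linarith
  have r5 : coeff 5 R = -1206 := by rw [r1, r2, r3, r4] at e5; linarith
  exact ⟨r1, r2, r3, r4, r5⟩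

theorem Q_initial_coeffs (R Q : PowerSeries ℚ)
    (h0 : PowerSeries.constantCoeff R = 0)
    (hR : ∀ m : ℕ, PowerSeries.coeff m (PowerSeries.X : PowerSeries ℚ)
      = ∑ n ∈ Finset.range m,
          (1 / (n + 1 : ℚ)) * ((2 * n).choose n : ℚ) * ((3 * n).choose n : ℚ)
            * PowerSeries.coeff m (R ^ (n + 1)))
    (hQ : 3 * PowerSeries.X ^ 2 * Q = PowerSeries.X - 3 * PowerSeries.X ^ 2 - R) :
    PowerSeries.coeff 1 Q = 4 ∧ PowerSeries.coeff 2 Q = 35 ∧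
      PowerSeries.coeff 3 Q = 402 := by
  obtain ⟨-, -, r3, r4, r5⟩ := coeffs_of_omega_comp_eq_X h0 hR
  have q1 := three_mul_coeff_succ_eq_neg_coeff hQ 0
  have q2 := three_mul_coeff_succ_eq_neg_coeff hQ 1
  have q3 := three_mul_coeff_succ_eq_neg_coeff hQ 2
  norm_num [r3, r4, r5] at q1 q2 q3
  exact ⟨by linarith, by linarith, by linarith⟩
end

section
/- The series F(r) = ∑_{n≥0} ((3n+2)/(2(n+1)))·C(2n,n)·C(3n+1, 2n)·r^n has nth coefficient asymptotic to c·27^n/n for some constant c > 0; consequently the coefficient ratio [r^n]F·n/27^n converges to a positive constant. In particular, [r^n]F grows like 27^n up to a factor of order 1/n. -/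
/-!
Up to the rational factor (3n+2)(3n+1)/(2(n+1)²) → 9/2, the coefficient is the multinomial
coefficient (3n)!/(n!)³, and Stirling's formula gives (3n)!/(n!)³ ~ 27ⁿ·√3/(2πn).
Hence the limit is c = 9√3/(4π).
-/

open Filter Topology Asymptotics Real
open scoped Nat

lemma three_mul_add_two_div_mul_choose_mul_choose (n : ℕ) :
    ((3 * n + 2 : ℝ) / (2 * (n + 1))) * (2 * n).choose n * (3 * n + 1).choose (2 * n)
      = (3 * n + 2) * (3 * n + 1) / (2 * (n + 1) ^ 2) * ((3 * n)! / (n ! ^ 3)) := by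
  rw [Nat.cast_choose ℝ (by omega : n ≤ 2 * n), Nat.cast_choose ℝ (by omega : 2 * n ≤ 3 * n + 1),
    show 2 * n - n = n by omega, show 3 * n + 1 - 2 * n = n + 1 by omega,
    Nat.factorial_succ (3 * n), Nat.factorial_succ n]
  push_cast
  field_simp

lemma tendsto_factorial_three_mul_div_factorial_pow_three :
    Tendsto (fun n : ℕ => ((3 * n)! / n ! ^ 3 : ℝ) * n / 27 ^ n) atTop (𝓝 (√3 / (2 * π))) := by
  have h3n : Tendsto (fun n : ℕ => 3 * n) atTop atTop :=
    tendsto_id.const_mul_atTop' (by norm_num)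
  have hequiv := ((Stirling.factorial_isEquivalent_stirling.comp_tendsto h3n).div
    (Stirling.factorial_isEquivalent_stirling.pow 3)).mul
    (IsEquivalent.refl (u := fun n : ℕ => (n : ℝ) / 27 ^ n))
  refine (hequiv.tendsto_nhds_iff.mpr (tendsto_const_nhds.congr' ?_)).congr fun n => ?_
  · filter_upwards [eventually_gt_atTop 0] with n hn
    have hn' : (0 : ℝ) < n := by exact_mod_cast hn
    simp only [Function.comp_apply, Pi.div_apply, Pi.mul_apply, Pi.pow_apply]
    push_cast
    rw [show 2 * (3 * n) * π = 3 * (2 * n * π) by ring, sqrt_mul (by norm_num),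
      show (3 * n / exp 1) ^ (3 * n) = 27 ^ n * ((n / exp 1) ^ n) ^ 3 by
        rw [mul_div_assoc, mul_pow, pow_mul, pow_mul']; norm_num,
      mul_pow, show √(2 * n * π) ^ 3 = (2 * n * π) * √(2 * n * π) by
        rw [pow_succ, sq_sqrt (by positivity)]]
    field_simp
  · simp only [Function.comp_apply, Pi.div_apply, Pi.mul_apply, Pi.pow_apply, mul_div_assoc]

lemma tendsto_three_mul_add_two_mul_three_mul_add_one_div :
    Tendsto (fun n : ℕ => (3 * n + 2 : ℝ) * (3 * n + 1) / (2 * (n + 1) ^ 2)) atTop (𝓝 (9 / 2)) := by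
  have h : Tendsto (fun n : ℕ => 1 / ((n : ℝ) + 1)) atTop (𝓝 0) :=
    tendsto_one_div_add_atTop_nhds_zero_nat
  have := (((tendsto_const_nhds (x := (3 : ℝ))).sub h).mul
    ((tendsto_const_nhds (x := (3 : ℝ))).sub (h.const_mul 2))).div_const 2
  norm_num at this
  refine this.congr fun n => ?_
  field_simp
  ring

theorem F_coeff_asymptotics :
    ∃ c : ℝ, 0 < c ∧ Filter.Tendsto
      (fun n : ℕ =>
        ((((3 * n + 2 : ℚ) / (2 * (n + 1 : ℚ))) * ((2 * n).choose n : ℚ)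
            * ((3 * n + 1).choose (2 * n) : ℚ) : ℚ) : ℝ) * (n : ℝ) / 27 ^ n)
      Filter.atTop (nhds c) := by
  refine ⟨9 / 2 * (√3 / (2 * π)), by positivity, ?_⟩
  refine (tendsto_three_mul_add_two_mul_three_mul_add_one_div.mul
    tendsto_factorial_three_mul_div_factorial_pow_three).congr fun n => ?_
  push_cast
  rw [three_mul_add_two_div_mul_choose_mul_choose]
  ring
end
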